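/- If g is monotone and submodular on Finset Q, then for any set S and any finite set O, there exists q ∈ O with g(S ∪ {q}) − g(S) ≥ (g(S ∪ O) − g(S)) / |O|, provided O is nonempty. -/
import Mathlib

theorem submodular_averaging {Q : Type*} [DecidableEq Q] (g : Finset Q → ℝ)
    (hmono : ∀ S S' : Finset Q, S ⊆ S' → g S ≤ g S')
    (hsub : ∀ (S S' : Finset Q) (q : Q), S ⊆ S' →
      g (insert q S) - g S ≥ g (insert q S') - g S')
    (S O : Finset Q) (hO : O.Nonempty) :
    ∃ q ∈ O, g (insert q S) - g S ≥ (g (S ∪ O) - g S) / O.card := by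
  have key : ∀ T : Finset Q, g (S ∪ T) - g S ≤ ∑ q ∈ T, (g (insert q S) - g S) := by
    intro T
    induction T using Finset.induction with
    | empty => simp
    | @insert a T' ha ih =>
      rw [Finset.sum_insert ha]
      have h1 : g (S ∪ insert a T') - g S =
          (g (insert a (S ∪ T')) - g (S ∪ T')) + (g (S ∪ T') - g S) := by
        rw [Finset.union_insert]; ring
      have h2 := hsub S (S ∪ T') a (Finset.subset_union_left)
      linarith
  have hcard : (O.card : ℝ) ≠ 0 := by
    exact_mod_cast Finset.card_ne_zero_of_mem hO.choose_spec
  have hsum : ∑ _q ∈ O, (g (S ∪ O) - g S) / O.card ≤ ∑ q ∈ O, (g (insert q S) - g S) := by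
    rw [Finset.sum_const, nsmul_eq_mul, mul_div_cancel₀ _ hcard]
    exact key O
  obtain ⟨q, hq, hge⟩ := Finset.exists_le_of_sum_le hO hsum
  exact ⟨q, hq, hge⟩
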